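/- arXiv:1205.0327 — 10 statements merged into one kernel-verified Lean document; each statement's English description precedes it below -/
import Mathlib

section
/- If G is a finite connected simple graph that is uniquely dimensional, then G contains no pair of twin vertices. -/
open SimpleGraph

/-- `W` is a resolving set for `G`: any two distinct vertices are distinguished
by their distance to some vertex of `W`. -/
def IsResolvingSet {V : Type*} (G : SimpleGraph V) (W : Finset V) : Prop :=
  ∀ u v : V, u ≠ v → ∃ w ∈ W, G.dist u w ≠ G.dist v w

/-- The metric dimension of `G`: the minimum cardinality of a resolving set. -/
noncomputable def metricDim {V : Type*} (G : SimpleGraph V) : ℕ :=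
  sInf {k | ∃ W : Finset V, IsResolvingSet G W ∧ W.card = k}

/-- `B` is a metric basis: a resolving set of minimum cardinality. -/
def IsMetricBasis {V : Type*} (G : SimpleGraph V) (B : Finset V) : Prop :=
  IsResolvingSet G B ∧ B.card = metricDim G

/-- `G` is uniquely dimensional: it has exactly one metric basis. -/
def UniquelyDimensional {V : Type*} (G : SimpleGraph V) : Prop :=
  ∃! B : Finset V, IsMetricBasis G B

/-- `G` is uniquely `k`-dimensional: a unique metric basis and metric dimension `k`. -/
def UniquelyKDimensional {V : Type*} (G : SimpleGraph V) (k : ℕ) : Prop :=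
  UniquelyDimensional G ∧ metricDim G = k

/-- Key auxiliary distance lemma for twins. -/
private lemma twin_dist_le {V : Type*} (G : SimpleGraph V) (hconn : G.Connected)
    {u v : V} (hAdj : ∀ x : V, G.Adj v x → x ≠ u → G.Adj u x)
    {w : V} (hwv : w ≠ v) : G.dist u w ≤ G.dist v w := by
  obtain ⟨p, hp⟩ := hconn.exists_walk_length_eq_dist v w
  cases p with
  | nil => exact absurd rfl hwv
  | cons h q =>
    rename_i x
    simp only [Walk.length_cons] at hp
    rcases eq_or_ne x u with rfl | hxu
    · have h1 := SimpleGraph.dist_le q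
      omega
    · have hux : G.Adj u x := hAdj x h hxu
      have h1 := SimpleGraph.dist_le (Walk.cons hux q)
      simp only [Walk.length_cons] at h1
      omega

theorem stmt1 {V : Type*} [Fintype V] (G : SimpleGraph V)
    (hconn : G.Connected) (hud : UniquelyDimensional G) :
    ¬ ∃ u v : V, u ≠ v ∧ G.neighborSet u \ {v} = G.neighborSet v \ {u} := by
  classical
  rintro ⟨u, v, huv, htwin⟩
  have htw : ∀ x : V, (G.Adj u x ∧ x ≠ v) ↔ (G.Adj v x ∧ x ≠ u) := by
    intro x
    have := Set.ext_iff.mp htwin x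
    simpa [SimpleGraph.mem_neighborSet] using this
  have hAdj₁ : ∀ x : V, G.Adj v x → x ≠ u → G.Adj u x :=
    fun x h1 h2 => ((htw x).mpr ⟨h1, h2⟩).1
  have hAdj₂ : ∀ x : V, G.Adj u x → x ≠ v → G.Adj v x :=
    fun x h1 h2 => ((htw x).mp ⟨h1, h2⟩).1
  have hd : ∀ w : V, w ≠ u → w ≠ v → G.dist u w = G.dist v w :=
    fun w h1 h2 => le_antisymm (twin_dist_le G hconn hAdj₁ h2) (twin_dist_le G hconn hAdj₂ h1)
  have hδ : G.dist u v ≠ 0 := fun h => huv (hconn.dist_eq_zero_iff.mp h)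
  obtain ⟨B, hB, huniqB⟩ := hud
  -- at least one of u, v belongs to B
  have hmem : u ∈ B ∨ v ∈ B := by
    obtain ⟨w, hwB, hwd⟩ := hB.1 u v huv
    rcases eq_or_ne w u with rfl | h1
    · exact Or.inl hwB
    rcases eq_or_ne w v with rfl | h2
    · exact Or.inr hwB
    · exact absurd (hd w h1 h2) hwd
  -- swapping u and v preserves distances
  set σ : V ≃ V := Equiv.swap u v with hσdef
  have hσu : σ u = v := Equiv.swap_apply_left u v
  have hσv : σ v = u := Equiv.swap_apply_right u v
  have hA : ∀ b : V, b ≠ u → b ≠ v → (G.Adj u b ↔ G.Adj v b) :=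
    fun b h1 h2 => ⟨fun h => hAdj₂ b h h2, fun h => hAdj₁ b h h1⟩
  have hσfix : ∀ c : V, c ≠ u → c ≠ v → σ c = c := by
    intro c h1 h2
    rw [hσdef]; exact Equiv.swap_apply_of_ne_of_ne h1 h2
  have hσadj : ∀ a b : V, G.Adj a b → G.Adj (σ a) (σ b) := by
    intro a b hab
    rcases eq_or_ne a u with hau | hau
    · have ha : σ a = v := by rw [hau]; exact hσu
      rcases eq_or_ne b v with hbv | hbv
      · have hb : σ b = u := by rw [hbv]; exact hσv
        rw [ha, hb]
        rw [hau, hbv] at hab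
        exact hab.symm
      · have hbu : b ≠ u := by rw [← hau]; exact hab.ne'
        rw [ha, hσfix b hbu hbv]
        rw [hau] at hab
        exact (hA b hbu hbv).mp hab
    · rcases eq_or_ne a v with hav | hav
      · have ha : σ a = u := by rw [hav]; exact hσv
        rcases eq_or_ne b u with hbu | hbu
        · have hb : σ b = v := by rw [hbu]; exact hσu
          rw [ha, hb]
          rw [hav, hbu] at hab
          exact hab.symm
        · have hbv : b ≠ v := by rw [← hav]; exact hab.ne'
          rw [ha, hσfix b hbu hbv]
          rw [hav] at hab
          exact (hA b hbu hbv).mpr hab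
      · rw [hσfix a hau hav]
        rcases eq_or_ne b u with hbu | hbu
        · have hb : σ b = v := by rw [hbu]; exact hσu
          rw [hb]
          rw [hbu] at hab
          exact ((hA a hau hav).mp hab.symm).symm
        · rcases eq_or_ne b v with hbv | hbv
          · have hb : σ b = u := by rw [hbv]; exact hσv
            rw [hb]
            rw [hbv] at hab
            exact ((hA a hau hav).mpr hab.symm).symm
          · rw [hσfix b hbu hbv]; exact hab
  have hdistle : ∀ a b : V, G.dist (σ a) (σ b) ≤ G.dist a b := by
    intro a b
    obtain ⟨p, hp⟩ := hconn.exists_walk_length_eq_dist a b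
    have h1 := SimpleGraph.dist_le (p.map (⟨σ, fun {x y} h => hσadj x y h⟩ : G →g G))
    rw [Walk.length_map, hp] at h1
    exact h1
  have hσσ : ∀ a : V, σ (σ a) = a := fun a => Equiv.swap_apply_self u v a
  have hdisteq : ∀ a b : V, G.dist (σ a) (σ b) = G.dist a b := by
    intro a b
    refine le_antisymm (hdistle a b) ?_
    have h2 := hdistle (σ a) (σ b)
    rwa [hσσ, hσσ] at h2
  have hres_swap : IsResolvingSet G (B.image σ) := by
    intro a b hab
    obtain ⟨w, hw, hwd⟩ := hB.1 (σ a) (σ b) (fun h => hab (σ.injective h))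
    refine ⟨σ w, Finset.mem_image_of_mem σ hw, ?_⟩
    have e1 : G.dist a (σ w) = G.dist (σ a) w := by
      rw [← hdisteq (σ a) w, hσσ]
    have e2 : G.dist b (σ w) = G.dist (σ b) w := by
      rw [← hdisteq (σ b) w, hσσ]
    rw [e1, e2]
    exact hwd
  have hbasis_swap : IsMetricBasis G (B.image σ) := by
    refine ⟨hres_swap, ?_⟩
    rw [Finset.card_image_of_injective B σ.injective]
    exact hB.2
  have himg : B.image σ = B := huniqB _ hbasis_swap
  by_cases huB : u ∈ B
  · by_cases hvB : v ∈ B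
    · -- main case : both u and v are in the unique basis
      have hcard1 : 1 ≤ B.card := Finset.card_pos.mpr ⟨u, huB⟩
      have hnotres : ¬ IsResolvingSet G (B.erase u) := by
        intro h
        have h1 : metricDim G ≤ (B.erase u).card := Nat.sInf_le ⟨B.erase u, h, rfl⟩
        rw [Finset.card_erase_of_mem huB] at h1
        have h2 := hB.2
        omega
      unfold IsResolvingSet at hnotres
      push_neg at hnotres
      obtain ⟨a, b, hab, hall⟩ := hnotres
      have hvE : v ∈ B.erase u := Finset.mem_erase.mpr ⟨huv.symm, hvB⟩
      -- any pair resolved only by u must contain u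
      have honly : ∀ a b : V, a ≠ b → (∀ w ∈ B.erase u, G.dist a w = G.dist b w) →
          a = u ∨ b = u := by
        intro a b hab hall
        have hv := hall v hvE
        by_contra hcon
        push_neg at hcon
        obtain ⟨hau, hbu⟩ := hcon
        rcases eq_or_ne a v with rfl | hav
        · rw [SimpleGraph.dist_self] at hv
          exact hab (hconn.dist_eq_zero_iff.mp hv.symm).symm
        rcases eq_or_ne b v with rfl | hbv
        · rw [SimpleGraph.dist_self] at hv
          exact hab (hconn.dist_eq_zero_iff.mp hv)
        · have h1 : G.dist a u = G.dist a v := by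
            rw [SimpleGraph.dist_comm, hd a hau hav]
            exact SimpleGraph.dist_comm
          have h2 : G.dist b u = G.dist b v := by
            rw [SimpleGraph.dist_comm, hd b hbu hbv]
            exact SimpleGraph.dist_comm
          obtain ⟨w, hwB, hwd⟩ := hB.1 a b hab
          rcases eq_or_ne w u with hwu | hwu
          · rw [hwu] at hwd
            exact hwd (h1.trans (hv.trans h2.symm))
          · exact hwd (hall w (Finset.mem_erase.mpr ⟨hwu, hwB⟩))
      obtain ⟨y, hyu, hy⟩ : ∃ y : V, y ≠ u ∧ ∀ w ∈ B.erase u, G.dist u w = G.dist y w := by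
        rcases honly a b hab hall with rfl | rfl
        · exact ⟨b, hab.symm, hall⟩
        · exact ⟨a, hab, fun w hw => (hall w hw).symm⟩
      have hyv : y ≠ v := by
        intro h
        have h1 := hy v hvE
        rw [h, SimpleGraph.dist_self] at h1
        exact hδ h1
      have hyB : y ∉ B := by
        intro h
        have h1 := hy y (Finset.mem_erase.mpr ⟨hyu, h⟩)
        rw [SimpleGraph.dist_self] at h1
        exact hyu (hconn.dist_eq_zero_iff.mp h1).symm
      have hyuv : G.dist u y = G.dist u v := by
        calc G.dist u y = G.dist v y := hd y hyu hyv
          _ = G.dist y v := SimpleGraph.dist_comm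
          _ = G.dist u v := (hy v hvE).symm
      have hyd : G.dist u y ≠ 0 := by rw [hyuv]; exact hδ
      have hyE : y ∉ B.erase u := fun h => hyB (Finset.mem_of_mem_erase h)
      -- the exchanged set is another basis
      have hCcard : (insert y (B.erase u)).card = B.card := by
        rw [Finset.card_insert_of_notMem hyE, Finset.card_erase_of_mem huB]
        omega
      have hCres : IsResolvingSet G (insert y (B.erase u)) := by
        intro a' b' hab'
        by_cases hex : ∃ w ∈ B.erase u, G.dist a' w ≠ G.dist b' w
        · obtain ⟨w, h1, h2⟩ := hex
          exact ⟨w, Finset.mem_insert_of_mem h1, h2⟩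
        · push_neg at hex
          refine ⟨y, Finset.mem_insert_self _ _, ?_⟩
          have hbu' : ∀ c : V, u ≠ c → (∀ w ∈ B.erase u, G.dist u w = G.dist c w) →
              G.dist u y ≠ G.dist c y := by
            intro c huc hw
            have hcu : c ≠ u := huc.symm
            have hcv : c ≠ v := by
              intro h
              have h1 := hw v hvE
              rw [h, SimpleGraph.dist_self] at h1
              exact hδ h1
            rcases eq_or_ne c y with rfl | hcy
            · rw [SimpleGraph.dist_self]; exact hyd
            · exfalso
              obtain ⟨w, hwB, hwd⟩ := hB.1 c y hcy
              rcases eq_or_ne w u with hwu | hwu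
              · rw [hwu] at hwd
                have h1 : G.dist c u = G.dist u v := by
                  calc G.dist c u = G.dist u c := SimpleGraph.dist_comm
                    _ = G.dist v c := hd c hcu hcv
                    _ = G.dist c v := SimpleGraph.dist_comm
                    _ = G.dist u v := (hw v hvE).symm
                have h2 : G.dist y u = G.dist u v := by
                  rw [SimpleGraph.dist_comm]; exact hyuv
                exact hwd (h1.trans h2.symm)
              · have hwE : w ∈ B.erase u := Finset.mem_erase.mpr ⟨hwu, hwB⟩
                exact hwd ((hw w hwE).symm.trans (hy w hwE))
          rcases honly a' b' hab' hex with rfl | rfl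
          · exact hbu' b' hab' hex
          · exact fun h => hbu' a' hab'.symm (fun w hw => (hex w hw).symm) h.symm
      have hCbasis : IsMetricBasis G (insert y (B.erase u)) :=
        ⟨hCres, by rw [hCcard]; exact hB.2⟩
      have hCB : insert y (B.erase u) = B := huniqB _ hCbasis
      have hyB' : y ∈ B := hCB ▸ Finset.mem_insert_self y (B.erase u)
      exact hyB hyB'
    · -- u ∈ B, v ∉ B : swap gives a different basis
      have h1 : v ∈ B.image σ := by
        rw [← hσu]; exact Finset.mem_image_of_mem σ huB
      rw [himg] at h1
      exact hvB h1
  · rcases hmem with h | hvB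
    · exact huB h
    · have h1 : u ∈ B.image σ := by
        rw [← hσv]; exact Finset.mem_image_of_mem σ hvB
      rw [himg] at h1
      exact huB h1
end

section
/- If G is a finite connected simple graph of order n and diameter d, then β(G) ≤ n − d. -/
open SimpleGraph

open SimpleGraph

private lemma dist_getVert_le {V : Type*} (G : SimpleGraph V) (hconn : G.Connected) :
    ∀ {u v : V} (p : G.Walk u v) (i : ℕ), G.dist u (p.getVert i) ≤ i := by
  intro u v p
  induction p with
  | nil => intro i; simp [SimpleGraph.Walk.getVert, SimpleGraph.dist_self]
  | @cons a b c h q ih =>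
    intro i
    cases i with
    | zero => simp
    | succ n =>
      rw [SimpleGraph.Walk.getVert_cons_succ]
      calc G.dist a (q.getVert n) ≤ G.dist a b + G.dist b (q.getVert n) :=
            hconn.dist_triangle
        _ ≤ 1 + n := by
            gcongr
            · exact le_trans (G.dist_le (SimpleGraph.Walk.cons h SimpleGraph.Walk.nil)) (by simp)
            · exact ih n
        _ = n + 1 := by omega

private lemma getVert_dist_le {V : Type*} (G : SimpleGraph V) :
    ∀ {u v : V} (p : G.Walk u v) (i : ℕ), G.dist (p.getVert i) v ≤ p.length - i := by
  intro u v p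
  induction p with
  | nil => intro i; simp [SimpleGraph.Walk.getVert, SimpleGraph.dist_self]
  | @cons a b c h q ih =>
    intro i
    cases i with
    | zero =>
      simpa using G.dist_le (SimpleGraph.Walk.cons h q)
    | succ n =>
      rw [SimpleGraph.Walk.getVert_cons_succ]
      simpa using ih n

private lemma dist_getVert_eq {V : Type*} (G : SimpleGraph V) (hconn : G.Connected)
    {u v : V} (p : G.Walk u v) (hp : p.length = G.dist u v) {i : ℕ} (hi : i ≤ p.length) :
    G.dist u (p.getVert i) = i := by
  have h1 := dist_getVert_le G hconn p i
  have h2 := getVert_dist_le G p i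
  have h3 := hconn.dist_triangle (u := u) (v := p.getVert i) (w := v)
  omega

theorem stmt2 {V : Type*} [Fintype V] (G : SimpleGraph V)
    (hconn : G.Connected) :
    metricDim G ≤ Fintype.card V - G.diam := by
  classical
  have hne : Nonempty V := hconn.nonempty
  obtain ⟨u, v, huv⟩ := G.exists_dist_eq_diam
  obtain ⟨p, hp⟩ := (hconn u v).exists_walk_length_eq_dist
  set d := G.diam with hd
  have hplen : p.length = d := by rw [hp, huv]
  have hkey : ∀ i ≤ d, G.dist u (p.getVert i) = i := by
    intro i hi
    exact dist_getVert_eq G hconn p hp (by omega)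
  set S : Finset V := (Finset.range d).image (fun i => p.getVert (i + 1)) with hS
  have hcardS : S.card = d := by
    rw [hS, Finset.card_image_of_injOn, Finset.card_range]
    intro i hi j hj hij
    simp only [Finset.mem_coe, Finset.mem_range] at hi hj
    simp only at hij
    have h1 := hkey (i + 1) (by omega)
    have h2 := hkey (j + 1) (by omega)
    rw [hij] at h1
    omega
  set W : Finset V := Finset.univ \ S with hW
  have hWcard : W.card = Fintype.card V - d := by
    rw [hW, Finset.card_sdiff_of_subset (Finset.subset_univ S), Finset.card_univ, hcardS]
  have huW : u ∈ W := by
    rw [hW, Finset.mem_sdiff]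
    refine ⟨Finset.mem_univ u, ?_⟩
    rw [hS]
    simp only [Finset.mem_image, Finset.mem_range, not_exists, not_and]
    intro i hi heq
    have := hkey (i + 1) (by omega)
    rw [heq] at this
    simp [SimpleGraph.dist_self] at this
  have hres : IsResolvingSet G W := by
    intro a b hab
    by_cases ha : a ∈ W
    · exact ⟨a, ha, by
        simp only [SimpleGraph.dist_self]
        exact fun h => (hconn.pos_dist_of_ne (Ne.symm hab)).ne' h.symm⟩
    by_cases hb : b ∈ W
    · exact ⟨b, hb, by
        simp only [SimpleGraph.dist_self]
        exact fun h => (hconn.pos_dist_of_ne hab).ne' h⟩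
    · have haS : a ∈ S := by
        rw [hW, Finset.mem_sdiff] at ha; push_neg at ha
        exact ha (Finset.mem_univ a)
      have hbS : b ∈ S := by
        rw [hW, Finset.mem_sdiff] at hb; push_neg at hb
        exact hb (Finset.mem_univ b)
      rw [hS] at haS hbS
      simp only [Finset.mem_image, Finset.mem_range] at haS hbS
      obtain ⟨i, hi, hia⟩ := haS
      obtain ⟨j, hj, hjb⟩ := hbS
      refine ⟨u, huW, ?_⟩
      rw [G.dist_comm (u := a) (v := u), G.dist_comm (u := b) (v := u), ← hia, ← hjb,
        hkey (i + 1) (by omega), hkey (j + 1) (by omega)]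
      intro h
      apply hab
      rw [← hia, ← hjb]
      exact congrArg p.getVert (by omega)
  calc metricDim G ≤ W.card := Nat.sInf_le ⟨W, hres, rfl⟩
    _ = Fintype.card V - G.diam := hWcard
end

section
/- If G is a finite connected simple graph of diameter d and (v_0, v_1, …, v_d) is a path in G realizing the diameter, i.e., d(v_0, v_d) = d and consecutive vertices are adjacent, then V(G) \ {v_1, v_2, …, v_d} is a resolving set of G. -/
open SimpleGraph

/-!
Every vertex off the path resolves every pair containing it, since only it lies at
distance `0` from itself. Because the path realizes `d(v₀, v_d) = d`, it is a geodesic, so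
`d(v_i, v₀) = i` and `v₀` alone separates the path vertices `v₁, …, v_d`.
-/

namespace SimpleGraph

section PathOfFn

variable {V : Type*} {G : SimpleGraph V} {n : ℕ} {p : Fin (n + 1) → V}

theorem reachable_of_forall_adj_succ (hadj : ∀ i : Fin n, G.Adj (p i.castSucc) (p i.succ))
    (i : Fin (n + 1)) : G.Reachable (p 0) (p i) :=
  i.induction .rfl fun j hj ↦ hj.trans (hadj j).reachable

theorem dist_zero_le_of_forall_adj_succ (hadj : ∀ i : Fin n, G.Adj (p i.castSucc) (p i.succ))
    (i : Fin (n + 1)) : G.dist (p 0) (p i) ≤ i := by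
  induction i using Fin.induction with
  | zero => simp
  | succ j ih =>
    calc G.dist (p 0) (p j.succ)
        ≤ G.dist (p 0) (p j.castSucc) + G.dist (p j.castSucc) (p j.succ) :=
          (hadj j).reachable.dist_triangle_right _
      _ ≤ j + 1 := by rw [dist_eq_one_iff_adj.mpr (hadj j)]; simpa using ih

theorem dist_last_le_of_forall_adj_succ (hadj : ∀ i : Fin n, G.Adj (p i.castSucc) (p i.succ))
    (i : Fin (n + 1)) : G.dist (p i) (p (Fin.last n)) ≤ n - i := by
  induction i using Fin.reverseInduction with
  | last => simp
  | cast j ih =>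
    calc G.dist (p j.castSucc) (p (Fin.last n))
        ≤ G.dist (p j.castSucc) (p j.succ) + G.dist (p j.succ) (p (Fin.last n)) :=
          (hadj j).reachable.dist_triangle_left _
      _ ≤ n - j := by
        rw [dist_eq_one_iff_adj.mpr (hadj j)]
        simp only [Fin.val_succ] at ih
        omega

theorem dist_zero_eq_of_forall_adj_succ (hadj : ∀ i : Fin n, G.Adj (p i.castSucc) (p i.succ))
    (hdist : G.dist (p 0) (p (Fin.last n)) = n) (i : Fin (n + 1)) :
    G.dist (p 0) (p i) = i := by
  have hle := dist_zero_le_of_forall_adj_succ hadj i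
  have hle_last := dist_last_le_of_forall_adj_succ hadj i
  have htri : G.dist (p 0) (p (Fin.last n)) ≤
      G.dist (p 0) (p i) + G.dist (p i) (p (Fin.last n)) :=
    (reachable_of_forall_adj_succ hadj i).dist_triangle_left _
  omega

end PathOfFn

end SimpleGraph

theorem isResolvingSet_univ_sdiff_of_injOn {V : Type*} [Fintype V] [DecidableEq V]
    {G : SimpleGraph V} (hconn : G.Connected) {S : Finset V} {w : V} (hw : w ∉ S)
    (hinj : Set.InjOn (G.dist · w) S) : IsResolvingSet G (Finset.univ \ S) := by
  intro u v huv
  by_cases hu : u ∈ S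
  · by_cases hv : v ∈ S
    · exact ⟨w, by simpa using hw, fun h ↦ huv (hinj hu hv h)⟩
    · exact ⟨v, by simpa using hv, by rw [dist_self]; exact (hconn.pos_dist_of_ne huv).ne'⟩
  · exact ⟨u, by simpa using hu, by rw [dist_self]; exact (hconn.pos_dist_of_ne huv.symm).ne⟩

theorem stmt3_general {V : Type*} [Fintype V] [DecidableEq V] (G : SimpleGraph V)
    (hconn : G.Connected) (d : ℕ) (p : Fin (d + 1) → V)
    (hadj : ∀ i : Fin d, G.Adj (p i.castSucc) (p i.succ))
    (hdist : G.dist (p 0) (p (Fin.last d)) = d) :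
    IsResolvingSet G
      (Finset.univ \ Finset.image (fun i : Fin d => p i.succ) Finset.univ) := by
  have hdist_succ (i : Fin d) : G.dist (p i.succ) (p 0) = i + 1 := by
    rw [dist_comm, dist_zero_eq_of_forall_adj_succ hadj hdist, Fin.val_succ]
  refine isResolvingSet_univ_sdiff_of_injOn hconn (w := p 0) ?_ ?_
  · simp only [Finset.mem_image, Finset.mem_univ, true_and, not_exists]
    intro i hi
    simpa [hi] using hdist_succ i
  · simp only [Finset.coe_image, Finset.coe_univ, Set.image_univ]
    rintro _ ⟨i, rfl⟩ _ ⟨j, rfl⟩ hij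
    simp only [hdist_succ, Nat.add_right_cancel_iff, Fin.val_inj] at hij
    rw [hij]

theorem stmt3 {V : Type*} [Fintype V] [DecidableEq V] (G : SimpleGraph V)
    (hconn : G.Connected) (d : ℕ) (hd : G.diam = d) (p : Fin (d + 1) → V)
    (hadj : ∀ i : Fin d, G.Adj (p i.castSucc) (p i.succ))
    (hdist : G.dist (p 0) (p (Fin.last d)) = d) :
    IsResolvingSet G
      (Finset.univ \ Finset.image (fun i : Fin d => p i.succ) Finset.univ) :=
  stmt3_general G hconn d p hadj hdist
end

section
/- If G is a uniquely dimensional finite connected simple graph of order n that contains a cycle, and g is the girth of G (the length of a shortest cycle in G), then β(G) ≤ n − g + 1. -/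
open SimpleGraph

/-!
A shortest cycle `c₀ c₁ ⋯ c_{g-1}` is isometric: two distinct paths with the same ends contain a
cycle no longer than their total length, so a shortcut between `cᵢ` and `cⱼ` would close up a cycle
shorter than `g`. On an isometric cycle the two ends of one edge already separate all cycle
vertices by their distances, so the vertices off the cycle together with `c₀, c₁` form a resolving
set of size `n - g + 2`, and so do the vertices off the cycle together with `c₀, c_{g-1}`. A graph
with a unique metric basis cannot have two distinct resolving sets of size `β`, hence
`β < n - g + 2`.
-/

lemma isResolvingSet_of_forall_notMem {V : Type*} {G : SimpleGraph V} (hconn : G.Connected)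
    {W : Finset V} (h : ∀ u v, u ∉ W → v ∉ W → u ≠ v → ∃ w ∈ W, G.dist u w ≠ G.dist v w) :
    IsResolvingSet G W := by
  intro u v huv
  by_cases hu : u ∈ W
  · exact ⟨u, hu, by simpa using (hconn.pos_dist_of_ne huv.symm).ne⟩
  by_cases hv : v ∈ W
  · exact ⟨v, hv, by simpa using (hconn.pos_dist_of_ne huv).ne'⟩
  exact h u v hu hv huv

lemma metricDim_le_card {V : Type*} {G : SimpleGraph V} {W : Finset V} (hW : IsResolvingSet G W) :
    metricDim G ≤ W.card :=
  Nat.sInf_le ⟨W, hW, rfl⟩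

lemma UniquelyDimensional.metricDim_lt_card {V : Type*} {G : SimpleGraph V}
    (hG : UniquelyDimensional G) {W₁ W₂ : Finset V} (h₁ : IsResolvingSet G W₁)
    (h₂ : IsResolvingSet G W₂) (hne : W₁ ≠ W₂) (hcard : W₁.card = W₂.card) :
    metricDim G < W₁.card := by
  refine (metricDim_le_card h₁).lt_of_ne fun hdim => hne ?_
  obtain ⟨B, -, hB⟩ := hG
  exact (hB W₁ ⟨h₁, hdim.symm⟩).trans (hB W₂ ⟨h₂, hcard ▸ hdim.symm⟩).symm

namespace SimpleGraph

def cycleDist (g i j : ℕ) : ℕ := min (i - j + (j - i)) (g - (i - j + (j - i)))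

lemma cycleDist_comm (g i j : ℕ) : cycleDist g i j = cycleDist g j i := by
  unfold cycleDist; omega

lemma cycleDist_zero_ne_or_cycleDist_one_ne {g i j : ℕ} (hi : i < g) (hj : j < g) (hij : i ≠ j) :
    cycleDist g i 0 ≠ cycleDist g j 0 ∨ cycleDist g i 1 ≠ cycleDist g j 1 := by
  unfold cycleDist; omega

variable {V : Type*} {G : SimpleGraph V}

namespace Walk

lemma exists_isSubwalk_take_getVert {u v : V} (p : G.Walk u v) {i j : ℕ} (hij : i ≤ j)
    (hj : j ≤ p.length) :
    ∃ q : G.Walk (p.getVert i) (p.getVert j), q.IsSubwalk (p.take j) ∧ q.length = j - i :=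
  ⟨((p.take j).drop i).copy (by simp [min_eq_right hij]) rfl,
    (isSubwalk_drop _ i).copy _ _ rfl rfl, by simp [min_eq_left hj]⟩

lemma dist_getVert_le_cycleDist {a : V} (c : G.Walk a a) {i j : ℕ} (hi : i ≤ c.length)
    (hj : j ≤ c.length) : G.dist (c.getVert i) (c.getVert j) ≤ cycleDist c.length i j := by
  wlog hij : i ≤ j generalizing i j
  · rw [dist_comm, cycleDist_comm]
    exact this hj hi (by omega)
  obtain ⟨q, -, hq⟩ := c.exists_isSubwalk_take_getVert hij hj
  have hdirect := dist_le q
  have haround := dist_le ((c.drop j).append (c.take i))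
  simp only [length_append, drop_length, take_length] at haround
  rw [dist_comm] at haround
  unfold cycleDist
  omega

variable {a : V} {c : G.Walk a a}

lemma IsCycle.cycleDist_le_dist (hc : c.IsCycle) (hgirth : G.girth = c.length) {i j : ℕ}
    (hi : i < c.length) (hj : j < c.length) :
    cycleDist c.length i j ≤ G.dist (c.getVert i) (c.getVert j) := by
  wlog hij : i ≤ j generalizing i j
  · rw [dist_comm, cycleDist_comm]
    exact this hj hi (by omega)
  obtain ⟨q, hqc, hq⟩ := c.exists_isSubwalk_take_getVert hij hj.le
  have hqp : q.IsPath := isPath_of_isSubwalk hqc (hc.isPath_take hj)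
  obtain ⟨p, hp, hpd⟩ := q.reachable.exists_path_of_dist
  rw [← hpd]
  by_cases hpq : p = q
  · subst hpq
    unfold cycleDist
    omega
  -- `p` and `q` together contain a cycle, which is no shorter than `c`
  obtain ⟨_, -, -, cyc, hcyc, hsub⟩ := hp.exists_isCycle_sublist_of_ne hqp hpq
  have hlen := hsub.length_le
  simp only [List.length_append, List.length_tail, length_support,
    List.length_reverse] at hlen
  have := G.girth_le_length hcyc
  unfold cycleDist
  omega

lemma IsCycle.dist_getVert_eq_cycleDist (hc : c.IsCycle) (hgirth : G.girth = c.length)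
    {i j : ℕ} (hi : i < c.length) (hj : j < c.length) :
    G.dist (c.getVert i) (c.getVert j) = cycleDist c.length i j :=
  (c.dist_getVert_le_cycleDist hi.le hj.le).antisymm (hc.cycleDist_le_dist hgirth hi hj)

lemma exists_lt_length_getVert_eq (hc : ¬ c.Nil) {x : V} (hx : x ∈ c.support) :
    ∃ m < c.length, c.getVert m = x := by
  obtain ⟨n, rfl, hn⟩ := mem_support_iff_exists_getVert.mp hx
  rcases hn.lt_or_eq with hn | rfl
  · exact ⟨n, hn, rfl⟩
  · exact ⟨0, not_nil_iff_lt_length.mp hc, by simp⟩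

section Landmarks

variable [DecidableEq V]

lemma IsCycle.card_support_toFinset (hc : c.IsCycle) : c.support.toFinset.card = c.length := by
  have ha : a ∈ c.support.tail := c.end_mem_tail_support hc.not_nil
  rw [← cons_tail_support, List.toFinset_cons, Finset.insert_eq_of_mem (List.mem_toFinset.mpr ha),
    List.toFinset_card_of_nodup hc.support_nodup, List.length_tail, length_support,
    Nat.add_sub_cancel]

variable [Fintype V]

def landmarkSet (c : G.Walk a a) : Finset V := c.support.toFinsetᶜ ∪ {a, c.snd}

lemma IsCycle.card_landmarkSet (hc : c.IsCycle) :
    (landmarkSet c).card = Fintype.card V - c.length + 2 := by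
  have hpair : ({a, c.snd} : Finset V) ⊆ c.support.toFinset := by
    simp [Finset.insert_subset_iff, c.start_mem_support]
  have hne : a ≠ c.snd := (c.adj_snd hc.not_nil).ne
  rw [landmarkSet, Finset.card_union_of_disjoint (disjoint_compl_left.mono_right hpair),
    Finset.card_compl, hc.card_support_toFinset, Finset.card_pair hne]

lemma IsCycle.snd_notMem_landmarkSet_reverse (hc : c.IsCycle) :
    c.snd ∉ landmarkSet c.reverse := by
  have hne : a ≠ c.snd := (c.adj_snd hc.not_nil).ne
  simp [landmarkSet, snd_reverse, hne.symm, hc.snd_ne_penultimate]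

lemma IsCycle.isResolvingSet_landmarkSet (hconn : G.Connected) (hc : c.IsCycle)
    (hgirth : G.girth = c.length) : IsResolvingSet G (landmarkSet c) := by
  refine isResolvingSet_of_forall_notMem hconn fun u v hu hv huv => ?_
  simp only [landmarkSet, Finset.mem_union, Finset.mem_compl, List.mem_toFinset,
    Finset.mem_insert, Finset.mem_singleton, not_or, not_not] at hu hv
  obtain ⟨i, hi, rfl⟩ := exists_lt_length_getVert_eq hc.not_nil hu.1
  obtain ⟨j, hj, rfl⟩ := exists_lt_length_getVert_eq hc.not_nil hv.1
  have hij : i ≠ j := by rintro rfl; exact huv rfl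
  have hlen := hc.three_le_length
  rcases cycleDist_zero_ne_or_cycleDist_one_ne hi hj hij with h | h
  · refine ⟨c.getVert 0, by simp [landmarkSet], ?_⟩
    rwa [hc.dist_getVert_eq_cycleDist hgirth hi (by omega),
      hc.dist_getVert_eq_cycleDist hgirth hj (by omega)]
  · refine ⟨c.snd, by simp [landmarkSet], ?_⟩
    rwa [snd, hc.dist_getVert_eq_cycleDist hgirth hi (by omega),
      hc.dist_getVert_eq_cycleDist hgirth hj (by omega)]

end Landmarks

end Walk
end SimpleGraph

theorem stmt5 {V : Type*} [Fintype V] (G : SimpleGraph V)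
    (hconn : G.Connected) (hcyc : ¬ G.IsAcyclic)
    (hud : UniquelyDimensional G) (g : ℕ) (hg : G.girth = g) :
    metricDim G ≤ Fintype.card V - g + 1 := by
  classical
  obtain ⟨a, c, hc, hgc⟩ := exists_girth_eq_length.mpr hcyc
  have hgc' : G.girth = c.reverse.length := by rw [Walk.length_reverse, hgc]
  have hne : Walk.landmarkSet c ≠ Walk.landmarkSet c.reverse := fun h =>
    hc.snd_notMem_landmarkSet_reverse (h ▸ by simp [Walk.landmarkSet])
  have hlt := hud.metricDim_lt_card (hc.isResolvingSet_landmarkSet hconn hgc)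
    (hc.reverse.isResolvingSet_landmarkSet hconn hgc') hne
    (by rw [hc.card_landmarkSet, hc.reverse.card_landmarkSet, Walk.length_reverse])
  rw [hc.card_landmarkSet, ← hgc, hg] at hlt
  omega
end

section
/- If G is a uniquely dimensional finite connected simple graph of order n, then 2·β(G) < n. -/
open SimpleGraph

-- key pair lemma
theorem keyPair {V : Type*} [Fintype V] [DecidableEq V] (G : SimpleGraph V)
    (hconn : G.Connected) (B : Finset V) (hB : IsMetricBasis G B)
    (huniq : ∀ B' : Finset V, IsMetricBasis G B' → B' = B)
    (b : V) (hb : b ∈ B) :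
    ∃ x y : V, x ≠ y ∧ x ∉ B ∧ y ∉ B ∧
      (∀ w ∈ B.erase b, G.dist x w = G.dist y w) ∧ G.dist x b ≠ G.dist y b := by
  classical
  have hd0 : ∀ u v : V, G.dist u v = 0 ↔ u = v := fun u v => hconn.dist_eq_zero_iff
  -- membership in unresolved pair implies not in erase
  have hout : ∀ x y : V, x ≠ y → (∀ w ∈ B.erase b, G.dist x w = G.dist y w) →
      x ∉ B.erase b ∧ y ∉ B.erase b := by
    intro x y hxy hagree
    constructor
    · intro hx
      have := hagree x hx
      rw [G.dist_self] at this
      exact hxy ((hd0 y x).mp this.symm).symm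
    · intro hy
      have := hagree y hy
      rw [G.dist_self] at this
      exact hxy ((hd0 x y).mp this)
  -- agreeing pairs are distinguished at b
  have hatb : ∀ x y : V, x ≠ y → (∀ w ∈ B.erase b, G.dist x w = G.dist y w) →
      G.dist x b ≠ G.dist y b := by
    intro x y hxy hagree
    obtain ⟨w, hw, hne⟩ := hB.1 x y hxy
    rcases eq_or_ne w b with rfl | hwb
    · exact hne
    · exact absurd (hagree w (Finset.mem_erase.mpr ⟨hwb, hw⟩)) hne
  -- erase not resolving
  have hnr : ¬ IsResolvingSet G (B.erase b) := by
    intro h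
    have h1 : metricDim G ≤ (B.erase b).card := Nat.sInf_le ⟨B.erase b, h, rfl⟩
    have h2 : (B.erase b).card = B.card - 1 := Finset.card_erase_of_mem hb
    have h3 : 0 < B.card := Finset.card_pos.mpr ⟨b, hb⟩
    have h4 := hB.2
    omega
  by_cases hfull : ∃ x y : V, x ≠ y ∧ x ∉ B ∧ y ∉ B ∧
      (∀ w ∈ B.erase b, G.dist x w = G.dist y w)
  · obtain ⟨x, y, hxy, hxB, hyB, hagree⟩ := hfull
    exact ⟨x, y, hxy, hxB, hyB, hagree, hatb x y hxy hagree⟩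
  exfalso
  -- extract unresolved pair from hnr
  simp only [IsResolvingSet, not_forall] at hnr
  obtain ⟨x, y, hxy, hnex⟩ := hnr
  push_neg at hnex
  have hagree : ∀ w ∈ B.erase b, G.dist x w = G.dist y w := fun w hw => hnex w hw
  obtain ⟨hxe, hye⟩ := hout x y hxy hagree
  -- since no fully-outside pair exists, one of x,y equals b; let p be the other
  have hpair : ∃ p : V, p ≠ b ∧ p ∉ B ∧ ∀ w ∈ B.erase b, G.dist b w = G.dist p w := by
    rcases eq_or_ne x b with rfl | hxb
    · have hyB : y ∉ B := fun h => hye (Finset.mem_erase.mpr ⟨hxy.symm, h⟩)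
      exact ⟨y, hxy.symm, hyB, hagree⟩
    · have hxB : x ∉ B := fun h => hxe (Finset.mem_erase.mpr ⟨hxb, h⟩)
      rcases eq_or_ne y b with rfl | hyb
      · exact ⟨x, hxb, hxB, fun w hw => (hagree w hw).symm⟩
      · have hyB : y ∉ B := fun h => hye (Finset.mem_erase.mpr ⟨hyb, h⟩)
        exact absurd ⟨x, y, hxy, hxB, hyB, hagree⟩ hfull
  obtain ⟨p, hpb, hpB, hpagree⟩ := hpair
  -- B' = insert p (B.erase b) is a resolving set
  set B' : Finset V := insert p (B.erase b) with hB'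
  have hres : IsResolvingSet G B' := by
    intro u v huv
    by_cases hw : ∃ w ∈ B.erase b, G.dist u w ≠ G.dist v w
    · obtain ⟨w, hw, hne⟩ := hw
      exact ⟨w, Finset.mem_insert_of_mem hw, hne⟩
    push_neg at hw
    refine ⟨p, Finset.mem_insert_self _ _, ?_⟩
    obtain ⟨hue, hve⟩ := hout u v huv hw
    -- neither u nor v in erase; not both outside B
    have houtside : ∀ z : V, z ≠ b → z ∉ B.erase b → z ∉ B := by
      intro z hzb hze h
      exact hze (Finset.mem_erase.mpr ⟨hzb, h⟩)
    rcases eq_or_ne u b with rfl | hub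
    · -- u = b; v agrees with b on erase, so v agrees with p too
      have hvB : v ∉ B := houtside v huv.symm hve
      rcases eq_or_ne v p with rfl | hvp
      · rw [G.dist_self]
        intro h
        exact hpb (((hd0 u v).mp h).symm)
      · exact absurd ⟨v, p, hvp, hvB, hpB, fun w hwm =>
          (hw w hwm).symm.trans (hpagree w hwm)⟩ hfull
    rcases eq_or_ne v b with rfl | hvb
    · have huB : u ∉ B := houtside u hub hue
      rcases eq_or_ne u p with rfl | hup
      · rw [G.dist_self]
        intro h
        exact hpb (((hd0 v u).mp h.symm).symm)
      · exact absurd ⟨u, p, hup, huB, hpB, fun w hwm =>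
          (hw w hwm).trans (hpagree w hwm)⟩ hfull
    · exact absurd ⟨u, v, huv, houtside u hub hue, houtside v hvb hve, hw⟩ hfull
  have hcard : B'.card = B.card := by
    rw [hB', Finset.card_insert_of_notMem (fun h => hpB (Finset.mem_of_mem_erase h)),
      Finset.card_erase_of_mem hb]
    have : 0 < B.card := Finset.card_pos.mpr ⟨b, hb⟩
    omega
  have hB'basis : IsMetricBasis G B' := ⟨hres, hcard.trans hB.2⟩
  have heq := huniq B' hB'basis
  rw [← heq, hB'] at hb
  rcases Finset.mem_insert.mp hb with h | h
  · exact hpb h.symm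
  · exact (Finset.mem_erase.mp h).1 rfl

theorem stmt6 {V : Type*} [Fintype V] (G : SimpleGraph V)
    (hconn : G.Connected) (hud : UniquelyDimensional G) :
    2 * metricDim G < Fintype.card V := by
  classical
  have hne : Nonempty V := hconn.nonempty
  obtain ⟨B, hB, huniq0⟩ := hud
  have huniq : ∀ B' : Finset V, IsMetricBasis G B' → B' = B := fun B' h => huniq0 B' h
  have hdim : metricDim G = B.card := hB.2.symm
  rw [hdim]
  rcases Finset.eq_empty_or_nonempty B with rfl | ⟨b0, hb0⟩
  · simpa using Fintype.card_pos
  have key := fun (i : ↥B) => keyPair G hconn B hB huniq i i.2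
  choose x y hxy hxB hyB hagree hneq using key
  set f : V → (↥B → ℚ) := fun v i => (G.dist v i : ℚ) with hf
  set v0 : V := x ⟨b0, hb0⟩ with hv0
  have hv0B : v0 ∉ B := hxB _
  set s : Finset (↥B → ℚ) := (Bᶜ.erase v0).image (fun v => f v - f v0) with hs
  set W : Submodule ℚ (↥B → ℚ) := Submodule.span ℚ (s : Set (↥B → ℚ)) with hW
  have hmemW : ∀ v : V, v ∉ B → f v - f v0 ∈ W := by
    intro v hv
    rcases eq_or_ne v v0 with rfl | hvv
    · simp
    · exact Submodule.subset_span (Finset.mem_coe.mpr (Finset.mem_image_of_mem _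
        (Finset.mem_erase.mpr ⟨hvv, Finset.mem_compl.mpr hv⟩)))
  have hgW : ∀ i : ↥B, f (x i) - f (y i) ∈ W := by
    intro i
    have heq : f (x i) - f (y i) = (f (x i) - f v0) - (f (y i) - f v0) := by ring
    rw [heq]
    exact sub_mem (hmemW _ (hxB i)) (hmemW _ (hyB i))
  set c : ↥B → ℚ := fun i => f (x i) i - f (y i) i with hc
  have hcne : ∀ i, c i ≠ 0 := by
    intro i h
    apply hneq i
    have h2 : f (x i) i = f (y i) i := sub_eq_zero.mp h
    simp only [hf] at h2
    exact_mod_cast h2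
  set u : ↥B → ℚˣ := fun i => Units.mk0 (c i) (hcne i) with hu
  have hgeq : (fun i => f (x i) - f (y i)) = u • (fun i => (Pi.basisFun ℚ ↥B) i) := by
    funext i
    ext j
    rcases eq_or_ne j i with rfl | hji
    · simp [Pi.basisFun_apply, hu, hc, hf]
    · have hjB : (j : V) ∈ B.erase (i : V) := by
        refine Finset.mem_erase.mpr ⟨?_, j.2⟩
        exact fun h => hji (Subtype.ext h)
      have := hagree i j hjB
      simp [Pi.basisFun_apply, Pi.single_apply, hji, hf, this]
  have hli : LinearIndependent ℚ (fun i => f (x i) - f (y i)) := by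
    rw [hgeq]
    exact (Pi.basisFun ℚ ↥B).linearIndependent.units_smul u
  have hliW : LinearIndependent ℚ (fun i : ↥B => (⟨f (x i) - f (y i), hgW i⟩ : W)) :=
    LinearIndependent.of_comp W.subtype hli
  have hcard1 : Fintype.card ↥B ≤ Module.finrank ℚ W :=
    hliW.fintype_card_le_finrank
  have hcard2 : Module.finrank ℚ W ≤ s.card := finrank_span_finset_le_card s
  have h1 : s.card ≤ (Bᶜ.erase v0).card := Finset.card_image_le
  have h2 : (Bᶜ.erase v0).card = Bᶜ.card - 1 :=
    Finset.card_erase_of_mem (Finset.mem_compl.mpr hv0B)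
  have h3 : B.card + Bᶜ.card = Fintype.card V := Finset.card_add_card_compl B
  have h4 : 0 < Bᶜ.card := Finset.card_pos.mpr ⟨v0, Finset.mem_compl.mpr hv0B⟩
  have h5 : Fintype.card ↥B = B.card := Fintype.card_coe B
  omega
end

section
/- If G is a finite connected simple graph of order n, diameter d, and metric dimension β(G) = k, then n ≤ k + d^k. -/
open SimpleGraph

theorem stmt8 {V : Type*} [Fintype V] (G : SimpleGraph V)
    (hconn : G.Connected) (k d : ℕ) (hk : metricDim G = k) (hd : G.diam = d) :
    Fintype.card V ≤ k + d ^ k := by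
  classical
  -- The set defining metricDim is nonempty (the whole vertex set resolves).
  have hne : {m | ∃ W : Finset V, IsResolvingSet G W ∧ W.card = m}.Nonempty := by
    refine ⟨(Finset.univ : Finset V).card, Finset.univ, ?_, rfl⟩
    intro u v huv
    refine ⟨u, Finset.mem_univ u, ?_⟩
    have h1 : G.dist u u = 0 := by simp
    have h2 : 0 < G.dist v u := hconn.pos_dist_of_ne (Ne.symm huv)
    omega
  obtain ⟨W, hW, hWcard⟩ := Nat.sInf_mem hne
  have hWk : W.card = k := by rw [hWcard]; exact hk
  cases subsingleton_or_nontrivial V with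
  | inl h =>
    have h1 : Fintype.card V ≤ 1 := Fintype.card_le_one_iff_subsingleton.mpr h
    have h2 : 1 ≤ k + d ^ k := by
      cases k with
      | zero => simp
      | succ n => omega
    omega
  | inr h =>
    have hetop : G.ediam ≠ ⊤ := by
      have hle : G.ediam ≤ Finset.univ.sup (fun p : V × V => G.edist p.1 p.2) :=
        SimpleGraph.ediam_le_of_edist_le fun u v =>
          Finset.le_sup (f := fun p : V × V => G.edist p.1 p.2) (Finset.mem_univ (u, v))
      have hlt : Finset.univ.sup (fun p : V × V => G.edist p.1 p.2) < ⊤ := by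
        rw [Finset.sup_lt_iff (by exact WithTop.coe_lt_top 0)]
        intro p _
        exact lt_top_iff_ne_top.mpr
          (SimpleGraph.edist_ne_top_iff_reachable.mpr (hconn.preconnected p.1 p.2))
      exact (lt_of_le_of_lt hle hlt).ne
    have hdistle : ∀ u v : V, G.dist u v ≤ d := by
      intro u v
      rw [← hd]
      exact SimpleGraph.dist_le_diam hetop
    -- Map vertices outside W injectively into W → Fin d.
    have hdpos : ∀ v : V, v ∈ Wᶜ → ∀ w : V, w ∈ W → 1 ≤ G.dist v w := by
      intro v hv w hw
      have : v ≠ w := by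
        intro e; subst e; exact (Finset.mem_compl.mp hv) hw
      exact hconn.pos_dist_of_ne this
    let f : ↥(Wᶜ) → (↥W → Fin d) := fun v w =>
      ⟨G.dist v.1 w.1 - 1, by
        have h1 := hdpos v.1 v.2 w.1 w.2
        have h2 := hdistle v.1 w.1
        omega⟩
    have hfinj : Function.Injective f := by
      intro v v' hvv'
      by_contra hne'
      have hvne : v.1 ≠ v'.1 := fun e => hne' (Subtype.ext e)
      obtain ⟨w, hwW, hwd⟩ := hW v.1 v'.1 hvne
      have := congrFun hvv' ⟨w, hwW⟩
      have h1 := hdpos v.1 v.2 w hwW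
      have h2 := hdpos v'.1 v'.2 w hwW
      have h3 : G.dist v.1 w - 1 = G.dist v'.1 w - 1 := by
        simpa [f, Fin.ext_iff] using this
      omega
    have hcomp : Fintype.card ↥(Wᶜ) ≤ d ^ k := by
      calc Fintype.card ↥(Wᶜ) ≤ Fintype.card (↥W → Fin d) :=
            Fintype.card_le_of_injective f hfinj
        _ = d ^ k := by simp [Fintype.card_fun, hWk, Fintype.card_coe]
    have hsplit : W.card + Wᶜ.card = Fintype.card V := Finset.card_add_card_compl W
    have : Fintype.card ↥(Wᶜ) = Wᶜ.card := Fintype.card_coe _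
    omega
end

section
/- For every integer k ≥ 2, there exists a finite connected simple graph G of order n = k + 2^k and diameter 2 such that G is uniquely dimensional with β(G) = k and G has a vertex of degree n − 1. -/
open SimpleGraph

/-!
In a graph of diameter at most two the distance from a vertex to another one is `1` or `2`
according to adjacency, so a resolving set `B` is exactly a set whose neighbourhood pattern
separates the vertices outside it; hence at most `2 ^ |B|` vertices lie outside `B`.

Take the elements of a `k`-set together with all its `2 ^ k` subsets, join `i` to `s` when
`i ∈ s`, and make the subsets a clique. The full subset is universal, so the diameter is two;
the `k` elements resolve the graph, and the counting bound forces every resolving set to have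
at least `k` vertices. If a resolving set of size `k` contains `a ≥ 1` subsets, these are adjacent
to all other subsets, so the remaining `2 ^ k - a` subsets must be separated by `k - a` elements,
which is impossible since `2 ^ (k - a) + a < 2 ^ k` for `k ≥ 2`.
-/

namespace SimpleGraph

variable {V : Type*} {G : SimpleGraph V} {u v w z : V}

lemma IsUniversal.card_neighborSet [Fintype V] (hz : G.IsUniversal z) :
    Nat.card (G.neighborSet z) = Fintype.card V - 1 := by
  classical
  rw [Nat.card_eq_fintype_card, card_neighborSet_eq_degree, degree_eq_card_sub_one]
  exact hz

lemma ediam_le_two_of_isUniversal (hz : G.IsUniversal z) : G.ediam ≤ 2 :=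
  calc G.ediam ≤ 2 * G.eccent z := G.ediam_le_two_mul_eccent z
    _ ≤ 2 * 1 := by gcongr; exact (G.eccent_le_one_iff z).mpr hz
    _ = 2 := mul_one 2

lemma dist_eq_two_of_ediam_le_two (hG : G.ediam ≤ 2) (huv : u ≠ v) (hadj : ¬G.Adj u v) :
    G.dist u v = 2 := by
  have hle : G.edist u v ≤ 2 := edist_le_ediam.trans hG
  obtain ⟨n, hn⟩ := ENat.ne_top_iff_exists.mp (ne_top_of_le_ne_top (by decide) hle)
  have h0 : n ≠ 0 := by
    rintro rfl; exact huv (edist_eq_zero_iff.mp hn.symm)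
  have h1 : n ≠ 1 := by
    rintro rfl; exact hadj (edist_eq_one_iff_adj.mp hn.symm)
  have h2 : n ≤ 2 := by exact_mod_cast hn ▸ hle
  rw [dist, ← hn, ENat.toNat_natCast]
  omega

lemma dist_eq_dist_iff_of_ediam_le_two (hG : G.ediam ≤ 2) (hu : u ≠ w) (hv : v ≠ w) :
    G.dist u w = G.dist v w ↔ (G.Adj u w ↔ G.Adj v w) := by
  by_cases hau : G.Adj u w <;> by_cases hav : G.Adj v w <;>
    simp [dist_eq_one_iff_adj.mpr, dist_eq_two_of_ediam_le_two hG, *]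

lemma diam_eq_two_of_ediam_le_two (hG : G.ediam ≤ 2) (huv : u ≠ v) (hadj : ¬G.Adj u v) :
    G.diam = 2 := by
  have hle : G.diam ≤ 2 := by
    simpa [diam] using ENat.toNat_le_toNat hG (by decide)
  have hge : 2 ≤ G.diam :=
    dist_eq_two_of_ediam_le_two hG huv hadj ▸ dist_le_diam (ne_top_of_le_ne_top (by decide) hG)
  omega

lemma card_le_two_pow_of_forall_exists_not_adj_iff {S D : Finset V}
    (hS : ∀ u ∈ S, ∀ v ∈ S, u ≠ v → ∃ d ∈ D, ¬(G.Adj u d ↔ G.Adj v d)) :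
    S.card ≤ 2 ^ D.card := by
  classical
  rw [← Finset.card_powerset]
  refine Finset.card_le_card_of_injOn (fun u => D.filter (G.Adj u))
    (fun u _ => Finset.mem_powerset.mpr (Finset.filter_subset _ _)) ?_
  intro u hu v hv huv
  by_contra hne
  obtain ⟨d, hd, hdiff⟩ := hS u hu v hv hne
  exact hdiff (by simpa [hd] using congrArg (d ∈ ·) huv)

end SimpleGraph

open SimpleGraph

variable {V : Type*} {G : SimpleGraph V}

lemma isResolvingSet_iff_of_ediam_le_two (hG : G.ediam ≤ 2) {W : Finset V} :
    IsResolvingSet G W ↔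
      ∀ u ∉ W, ∀ v ∉ W, u ≠ v → ∃ w ∈ W, ¬(G.Adj u w ↔ G.Adj v w) := by
  have hpre : G.Preconnected := preconnected_of_ediam_ne_top (ne_top_of_le_ne_top (by decide) hG)
  constructor
  · intro hW u hu v hv huv
    obtain ⟨w, hw, hdist⟩ := hW u v huv
    exact ⟨w, hw, fun h => hdist ((dist_eq_dist_iff_of_ediam_le_two hG
      (ne_of_mem_of_not_mem hw hu).symm (ne_of_mem_of_not_mem hw hv).symm).mpr h)⟩
  · intro hW u v huv
    by_cases hu : u ∈ W
    · exact ⟨u, hu, by rw [dist_self]; exact ((hpre v u).pos_dist_of_ne huv.symm).ne⟩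
    by_cases hv : v ∈ W
    · exact ⟨v, hv, by rw [dist_self]; exact ((hpre u v).pos_dist_of_ne huv).ne'⟩
    obtain ⟨w, hw, hadj⟩ := hW u hu v hv huv
    exact ⟨w, hw, fun h => hadj ((dist_eq_dist_iff_of_ediam_le_two hG
      (ne_of_mem_of_not_mem hw hu).symm (ne_of_mem_of_not_mem hw hv).symm).mp h)⟩

lemma Nat.two_pow_sub_add_lt_two_pow {k a : ℕ} (hk : 2 ≤ k) (ha : 1 ≤ a) (hak : a ≤ k) :
    2 ^ (k - a) + a < 2 ^ k := by
  rcases Nat.lt_or_ge a k with hlt | hge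
  · have hsplit : 2 ^ (k - a) * 2 ^ a = 2 ^ k := by rw [← pow_add, Nat.sub_add_cancel hak]
    have hpow : a < 2 ^ a := Nat.lt_two_pow_self
    have : 2 ≤ 2 ^ (k - a) := Nat.le_self_pow (by omega) 2
    nlinarith
  · obtain rfl : a = k := by omega
    have h1 : a - 1 < 2 ^ (a - 1) := Nat.lt_two_pow_self
    have h2 : 2 ^ a = 2 * 2 ^ (a - 1) := by rw [← pow_succ']; congr 1; omega
    simp only [Nat.sub_self, pow_zero]
    omega

variable {W : Finset V}

lemma IsResolvingSet.card_compl_le_two_pow [Fintype V] [DecidableEq V] (hG : G.ediam ≤ 2)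
    (hW : IsResolvingSet G W) : Wᶜ.card ≤ 2 ^ W.card :=
  card_le_two_pow_of_forall_exists_not_adj_iff fun u hu v hv =>
    (isResolvingSet_iff_of_ediam_le_two hG).mp hW u (Finset.mem_compl.mp hu) v
      (Finset.mem_compl.mp hv)

lemma metricDim_eq_card (hW : IsResolvingSet G W)
    (hmin : ∀ B, IsResolvingSet G B → W.card ≤ B.card) : metricDim G = W.card :=
  le_antisymm (Nat.sInf_le ⟨W, hW, rfl⟩)
    (le_csInf ⟨_, W, hW, rfl⟩ (by rintro _ ⟨B, hB, rfl⟩; exact hmin B hB))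

lemma uniquelyKDimensional_card (hW : IsResolvingSet G W)
    (hmin : ∀ B, IsResolvingSet G B → W.card ≤ B.card)
    (huniq : ∀ B, IsResolvingSet G B → B.card = W.card → B = W) :
    UniquelyKDimensional G W.card := by
  have hdim := metricDim_eq_card hW hmin
  exact ⟨⟨W, ⟨hW, hdim.symm⟩, fun B hB => huniq B hB.1 (hB.2.trans hdim)⟩, hdim⟩

theorem uniquelyKDimensional_of_isClique_compl [Fintype V] [DecidableEq V]
    (hG : G.ediam ≤ 2) (hW : IsResolvingSet G W) (hclique : G.IsClique (↑W)ᶜ)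
    (hcard : 2 ^ W.card ≤ Wᶜ.card) (hW2 : 2 ≤ W.card) : UniquelyKDimensional G W.card := by
  have hcardV : W.card + Wᶜ.card = Fintype.card V := Finset.card_add_card_compl W
  refine uniquelyKDimensional_card hW (fun B hB => ?_) (fun B hB hBW => ?_)
  · have hBc := hB.card_compl_le_two_pow hG
    have hBcV : B.card + Bᶜ.card = Fintype.card V := Finset.card_add_card_compl B
    by_contra! hlt
    have : 2 ^ B.card ≤ 2 ^ W.card := Nat.pow_le_pow_right two_pos hlt.le
    omega
  · -- Outside `B`, the clique `Wᶜ` is separated only by `B ∩ W`, since every vertex of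
    -- `B \ W` is adjacent to all of it.
    have hsep : ∀ u ∈ Wᶜ \ B, ∀ v ∈ Wᶜ \ B, u ≠ v → ∃ d ∈ B ∩ W, ¬(G.Adj u d ↔ G.Adj v d) := by
      intro u hu v hv huv
      simp only [Finset.mem_sdiff, Finset.mem_compl] at hu hv
      obtain ⟨d, hdB, hd⟩ := (isResolvingSet_iff_of_ediam_le_two hG).mp hB u hu.2 v hv.2 huv
      refine ⟨d, Finset.mem_inter.mpr ⟨hdB, ?_⟩, hd⟩
      by_contra hdW
      have hdu : u ≠ d := (ne_of_mem_of_not_mem hdB hu.2).symm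
      have hdv : v ≠ d := (ne_of_mem_of_not_mem hdB hv.2).symm
      exact hd (iff_of_true (hclique hu.1 hdW hdu) (hclique hv.1 hdW hdv))
    have hS := card_le_two_pow_of_forall_exists_not_adj_iff hsep
    rw [Finset.card_sdiff, ← Finset.sdiff_eq_inter_compl] at hS
    have hsplit := Finset.card_sdiff_add_card_inter B W
    rw [show (B ∩ W).card = W.card - (B \ W).card by omega] at hS
    have hBW0 : (B \ W).card = 0 := by
      by_contra h
      have := Nat.two_pow_sub_add_lt_two_pow hW2 (Nat.one_le_iff_ne_zero.mpr h)
        (hBW ▸ Finset.card_le_card Finset.sdiff_subset)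
      omega
    exact Finset.eq_of_subset_of_card_le (Finset.sdiff_eq_empty_iff_subset.mp
      (Finset.card_eq_zero.mp hBW0)) hBW.ge

def subsetGraph (α : Type*) : SimpleGraph (α ⊕ Finset α) where
  Adj
    | .inl i, .inr s | .inr s, .inl i => i ∈ s
    | .inr s, .inr t => s ≠ t
    | .inl _, .inl _ => False
  symm := ⟨by rintro (i | s) (j | t) h <;> simp_all [ne_comm]⟩
  loopless := ⟨by rintro (i | s) h <;> simp_all⟩

namespace subsetGraph

variable {α : Type*}

@[simp] lemma adj_inl_inr (i : α) (s : Finset α) :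
    (subsetGraph α).Adj (.inl i) (.inr s) ↔ i ∈ s := .rfl

@[simp] lemma adj_inr_inl (i : α) (s : Finset α) :
    (subsetGraph α).Adj (.inr s) (.inl i) ↔ i ∈ s := .rfl

@[simp] lemma adj_inr_inr (s t : Finset α) : (subsetGraph α).Adj (.inr s) (.inr t) ↔ s ≠ t := .rfl

lemma isUniversal_inr_univ [Fintype α] : (subsetGraph α).IsUniversal (.inr Finset.univ) := by
  rintro (i | s) h <;> simp_all [eq_comm]

end subsetGraph

section comap

variable {α : Type*} [Fintype α] (e : V ≃ α ⊕ Finset α)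

lemma isUniversal_comap_subsetGraph :
    ((subsetGraph α).comap e).IsUniversal (e.symm (.inr .univ)) := fun x hx => by
  simpa using subsetGraph.isUniversal_inr_univ (e.symm_apply_eq.not.mp hx)

lemma ediam_comap_subsetGraph_le_two : ((subsetGraph α).comap e).ediam ≤ 2 :=
  ediam_le_two_of_isUniversal (isUniversal_comap_subsetGraph e)

lemma connected_comap_subsetGraph [Nonempty V] : ((subsetGraph α).comap e).Connected :=
  connected_of_ediam_ne_top (ne_top_of_le_ne_top (by decide) (ediam_comap_subsetGraph_le_two e))

lemma diam_comap_subsetGraph [Nonempty α] : ((subsetGraph α).comap e).diam = 2 :=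
  diam_eq_two_of_ediam_le_two (ediam_comap_subsetGraph_le_two e)
    (u := e.symm (.inl (Classical.arbitrary α))) (v := e.symm (.inr ∅)) (by simp) (by simp)

def elementVertices : Finset V := Finset.univ.map (Function.Embedding.inl.trans e.symm.toEmbedding)

lemma mem_elementVertices {x : V} : x ∈ elementVertices e ↔ (e x).isLeft := by
  simp only [elementVertices, Finset.mem_map, Finset.mem_univ, true_and,
    Function.Embedding.trans_apply, Equiv.coe_toEmbedding, Function.Embedding.inl_apply,
    Equiv.symm_apply_eq, Sum.isLeft_iff]
  exact exists_congr fun _ => eq_comm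

lemma exists_eq_inr_of_not_mem_elementVertices {x : V} (hx : x ∉ elementVertices e) :
    ∃ s, e x = .inr s := by
  simpa [← Sum.isRight_iff, mem_elementVertices] using hx

lemma card_elementVertices : (elementVertices e).card = Fintype.card α := by
  simp [elementVertices]

lemma card_compl_elementVertices [Fintype V] [DecidableEq V] :
    (elementVertices e)ᶜ.card = 2 ^ (elementVertices e).card := by
  rw [Finset.card_compl, card_elementVertices, Fintype.card_congr e]
  simp

lemma isClique_compl_elementVertices :
    ((subsetGraph α).comap e).IsClique (↑(elementVertices e))ᶜ := by
  intro x hx y hy hxy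
  obtain ⟨s, hs⟩ := exists_eq_inr_of_not_mem_elementVertices e hx
  obtain ⟨t, ht⟩ := exists_eq_inr_of_not_mem_elementVertices e hy
  simpa [hs, ht] using fun hst => hxy (e.injective (by rw [hs, ht, hst]))

lemma isResolvingSet_elementVertices :
    IsResolvingSet ((subsetGraph α).comap e) (elementVertices e) := by
  refine (isResolvingSet_iff_of_ediam_le_two (ediam_comap_subsetGraph_le_two e)).mpr ?_
  intro x hx y hy hxy
  obtain ⟨s, hs⟩ := exists_eq_inr_of_not_mem_elementVertices e hx
  obtain ⟨t, ht⟩ := exists_eq_inr_of_not_mem_elementVertices e hy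
  have hst : s ≠ t := fun hst => hxy (e.injective (by rw [hs, ht, hst]))
  obtain ⟨i, hi⟩ : ∃ i, ¬(i ∈ s ↔ i ∈ t) := by simpa [Finset.ext_iff] using hst
  exact ⟨e.symm (.inl i), (mem_elementVertices e).mpr (by simp), by simpa [hs, ht] using hi⟩

theorem uniquelyKDimensional_comap_subsetGraph [Fintype V] [DecidableEq V]
    (hα : 2 ≤ Fintype.card α) : UniquelyKDimensional ((subsetGraph α).comap e) (Fintype.card α) :=
  card_elementVertices e ▸ uniquelyKDimensional_of_isClique_compl
    (ediam_comap_subsetGraph_le_two e) (isResolvingSet_elementVertices e)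
    (isClique_compl_elementVertices e) (card_compl_elementVertices e).ge
    (card_elementVertices e ▸ hα)

end comap

theorem stmt9 (k : ℕ) (hk : 2 ≤ k) :
    ∃ G : SimpleGraph (Fin (k + 2 ^ k)), G.Connected ∧ G.diam = 2 ∧
      UniquelyKDimensional G k ∧
      ∃ v, Nat.card (G.neighborSet v) = (k + 2 ^ k) - 1 := by
  let e : Fin (k + 2 ^ k) ≃ Fin k ⊕ Finset (Fin k) := Fintype.equivOfCardEq (by simp)
  have : Nonempty (Fin k) := ⟨⟨0, by omega⟩⟩
  refine ⟨(subsetGraph (Fin k)).comap e, connected_comap_subsetGraph e,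
    diam_comap_subsetGraph e, ?_, e.symm (.inr .univ), ?_⟩
  · simpa using uniquelyKDimensional_comap_subsetGraph e (by simpa using hk)
  · simpa using (isUniversal_comap_subsetGraph e).card_neighborSet
end

section
/- Let G be a finite connected simple graph of order k + d^k with metric dimension β(G) = k and diameter d. Then for every metric basis B of G and every vertex v ∈ B, the number of vertices at distance exactly d from v is at least d^{k−1}. -/
open SimpleGraph

theorem stmt11 {V : Type*} [Fintype V] (G : SimpleGraph V)
    (hconn : G.Connected) (k d : ℕ) (hcard : Fintype.card V = k + d ^ k)
    (hk : metricDim G = k) (hd : G.diam = d)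
    (B : Finset V) (hB : IsMetricBasis G B) (v : V) (hv : v ∈ B) :
    d ^ (k - 1) ≤ Nat.card {u : V | G.dist u v = d} := by
  classical
  have hne : Nonempty V := hconn.nonempty
  have hBcard : B.card = k := hB.2.trans hk
  have hk1 : 1 ≤ k := by
    have : B.Nonempty := ⟨v, hv⟩
    have := Finset.card_pos.mpr this
    omega
  have hed : G.ediam ≠ ⊤ := by
    obtain ⟨a, b, hab⟩ := G.exists_edist_eq_ediam_of_finite
    rw [← hab]
    exact edist_ne_top_iff_reachable.mpr (hconn.preconnected a b)
  have hdistle : ∀ u w : V, G.dist u w ≤ d := fun u w => hd ▸ dist_le_diam hed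
  have hdistpos : ∀ u w : V, u ≠ w → 1 ≤ G.dist u w := fun u w h =>
    hconn.pos_dist_of_ne h
  rcases Nat.eq_zero_or_pos d with hd0 | hd1
  · -- degenerate case d = 0 : the graph has a single vertex
    subst hd0
    have hsub : Subsingleton V := by
      rcases diam_eq_zero.mp hd with h | h
      · exact absurd h hed
      · exact h
    have hc1 : Fintype.card V = 1 := by
      have := Fintype.card_le_one_iff_subsingleton.mpr hsub
      have := Fintype.card_pos_iff.mpr hne
      omega
    have hk1' : k = 1 := by
      rw [hc1, Nat.zero_pow (by omega : 0 < k)] at hcard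
      omega
    subst hk1'
    simp only [Nat.sub_self, pow_zero]
    have hvmem : v ∈ {u : V | G.dist u v = 0} := by simp
    have : ({u : V | G.dist u v = 0} : Set V).Nonempty := ⟨v, hvmem⟩
    have hfin : ({u : V | G.dist u v = 0} : Set V).Finite := Set.toFinite _
    rw [Nat.card_coe_set_eq]
    exact (Set.ncard_pos hfin).mpr this
  · -- main case d ≥ 1
    set A : Finset V := Finset.univ.filter (fun u => G.dist u v = d) with hA
    set T : Finset V := Finset.univ.filter (fun u => u ∉ B ∧ G.dist u v ≠ d) with hT
    -- injective map on T into Ico 1 d × (functions B.erase v → Fin d)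
    haveI : NeZero d := ⟨by omega⟩
    let f : V → ℕ × (↥(B.erase v) → Fin d) := fun u =>
      (G.dist u v, fun w => ⟨min (G.dist u w.1 - 1) (d - 1), by omega⟩)
    have hTcard : T.card ≤ (d - 1) * d ^ (k - 1) := by
      have hmaps : ∀ u ∈ T, f u ∈
          (Finset.Ico 1 d) ×ˢ (Finset.univ : Finset (↥(B.erase v) → Fin d)) := by
        intro u hu
        simp only [hT, Finset.mem_filter] at hu
        obtain ⟨-, hub, hud⟩ := hu
        have h1 : 1 ≤ G.dist u v := hdistpos u v (fun h => hub (h ▸ hv))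
        have h2 : G.dist u v ≤ d := hdistle u v
        simp only [Finset.mem_product, Finset.mem_Ico, Finset.mem_univ, and_true, f]
        omega
      have hinj : Set.InjOn f ↑T := by
        intro u hu u' hu' hfe
        by_contra hne'
        obtain ⟨w, hw, hwne⟩ := hB.1 u u' hne'
        simp only [hT, Finset.coe_filter, Set.mem_setOf_eq] at hu hu'
        have hdw : ∀ x : V, x ∉ B → x ≠ w := fun x hx h => hx (h ▸ hw)
        have h1 : 1 ≤ G.dist u w := hdistpos u w (hdw u hu.2.1)
        have h1' : 1 ≤ G.dist u' w := hdistpos u' w (hdw u' hu'.2.1)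
        have h2 : G.dist u w ≤ d := hdistle u w
        have h2' : G.dist u' w ≤ d := hdistle u' w
        rcases eq_or_ne w v with rfl | hwv
        · exact hwne (congrArg Prod.fst hfe)
        · have hwm : w ∈ B.erase v := Finset.mem_erase.mpr ⟨hwv, hw⟩
          have := congrFun (congrArg Prod.snd hfe) ⟨w, hwm⟩
          have := congrArg Fin.val this
          simp only [f] at this
          omega
      have := Finset.card_le_card_of_injOn f hmaps hinj
      rwa [Finset.card_product, Nat.card_Ico, Finset.card_univ, Fintype.card_fun, Fintype.card_fin,
        Fintype.card_coe, Finset.card_erase_of_mem hv, hBcard] at this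
    -- every vertex is in A, B, or T
    have hcover : (Finset.univ : Finset V) ⊆ A ∪ B ∪ T := by
      intro u _
      by_cases h1 : G.dist u v = d
      · exact Finset.mem_union_left _ (Finset.mem_union_left _ (by simp [hA, h1]))
      · by_cases h2 : u ∈ B
        · exact Finset.mem_union_left _ (Finset.mem_union_right _ h2)
        · exact Finset.mem_union_right _ (by simp [hT, h1, h2])
    have hcount : Fintype.card V ≤ A.card + B.card + T.card := by
      calc Fintype.card V = (Finset.univ : Finset V).card := (Finset.card_univ).symm
        _ ≤ (A ∪ B ∪ T).card := Finset.card_le_card hcover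
        _ ≤ (A ∪ B).card + T.card := Finset.card_union_le _ _
        _ ≤ A.card + B.card + T.card := by
            have := Finset.card_union_le A B; omega
    have hpow : d ^ k = (d - 1) * d ^ (k - 1) + d ^ (k - 1) := by
      calc d ^ k = d ^ (k - 1) * d := by rw [← pow_succ]; congr 1; omega
        _ = (d - 1 + 1) * d ^ (k - 1) := by rw [Nat.sub_add_cancel hd1, mul_comm]
        _ = (d - 1) * d ^ (k - 1) + d ^ (k - 1) := by rw [add_mul, one_mul]
    have hAcard : d ^ (k - 1) ≤ A.card := by
      rw [hcard] at hcount
      rw [hBcard] at hcount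
      omega
    have hset : {u : V | G.dist u v = d} = ↑A := by
      ext u; simp [hA]
    rw [Nat.card_coe_set_eq, hset, Set.ncard_coe_finset]
    exact hAcard
end

section
/- For every integer k ≥ 2, there exists a finite connected simple graph of diameter 3 and order k + 3^k that is uniquely dimensional with metric dimension k. -/
/-! The graph consists of the cube `{0,1,2}^k`, two points adjacent when they differ by at most
one in every coordinate, and `k` landmarks, landmark `i` adjacent to the face `x i = 0`.
Landmark `i` is at distance `x i + 1` from the cube point `x`, so the landmarks resolve the graph
and its diameter is 3. Two cube points are at distance at most 2, so the distances from a cube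
point to the vertices of any set `W` are determined by their residues mod 3, and a resolving `W`
yields an injection `{0,1,2}^k → {0,1,2}^W`; hence `k ≤ |W|`. If `|W| = k` this injection is
a bijection, which excludes a cube point `g` from `W`: every code vanishing at `g` would have
`g` as its preimage, and there is more than one such code. -/

open SimpleGraph

namespace SimpleGraph.Iso

variable {V V' : Type*} {G : SimpleGraph V} {G' : SimpleGraph V'}

lemma edist_map_le (φ : G ≃g G') (u v : V) : G'.edist (φ u) (φ v) ≤ G.edist u v := by
  rcases eq_or_ne (G.edist u v) ⊤ with h | h
  · simp [h]
  · obtain ⟨p, hp⟩ := exists_walk_of_edist_ne_top h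
    simpa [← hp] using edist_le (p.map φ.toHom)

lemma edist_map (φ : G ≃g G') (u v : V) : G'.edist (φ u) (φ v) = G.edist u v :=
  (edist_map_le φ u v).antisymm (by simpa using edist_map_le φ.symm (φ u) (φ v))

lemma dist_map (φ : G ≃g G') (u v : V) : G'.dist (φ u) (φ v) = G.dist u v := by
  simp only [SimpleGraph.dist, edist_map]

lemma diam_eq (φ : G ≃g G') : G'.diam = G.diam := by
  simp only [diam, ediam_eq_iSup_iSup_edist]
  rw [← φ.toEquiv.iSup_comp]
  simp [← φ.toEquiv.iSup_comp (g := fun v => G'.edist _ v), edist_map]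

lemma isResolvingSet_map_iff (φ : G ≃g G') {W : Finset V} :
    IsResolvingSet G' (W.map φ.toEquiv.toEmbedding) ↔ IsResolvingSet G W := by
  simp only [IsResolvingSet, ← φ.toEquiv.forall_congr_right, Finset.mem_map]
  simp [dist_map]

lemma metricDim_eq (φ : G ≃g G') : metricDim G' = metricDim G := by
  unfold metricDim
  congr! 3 with n
  rw [← φ.toEquiv.finsetCongr.exists_congr_right]
  simp [Equiv.finsetCongr_apply, isResolvingSet_map_iff]

lemma isMetricBasis_map_iff (φ : G ≃g G') {W : Finset V} :
    IsMetricBasis G' (W.map φ.toEquiv.toEmbedding) ↔ IsMetricBasis G W := by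
  simp [IsMetricBasis, isResolvingSet_map_iff, metricDim_eq φ]

lemma uniquelyKDimensional_iff (φ : G ≃g G') {k : ℕ} :
    UniquelyKDimensional G' k ↔ UniquelyKDimensional G k := by
  rw [UniquelyKDimensional, UniquelyKDimensional, UniquelyDimensional, UniquelyDimensional,
    metricDim_eq φ, ← φ.toEquiv.finsetCongr.existsUnique_congr_right]
  simp [Equiv.finsetCongr_apply, isMetricBasis_map_iff]

end SimpleGraph.Iso

namespace SimpleGraph

variable {V : Type*} {G : SimpleGraph V}

lemma Walk.apply_le_apply_add_length {φ : V → ℕ} (hφ : ∀ x y, G.Adj x y → φ y ≤ φ x + 1)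
    {u v : V} (p : G.Walk u v) :
    φ v ≤ φ u + p.length := by
  induction p with
  | nil => simp
  | cons h _ ih => have := hφ _ _ h; simp only [Walk.length_cons]; omega

lemma Reachable.apply_le_apply_add_dist {φ : V → ℕ} (hφ : ∀ x y, G.Adj x y → φ y ≤ φ x + 1)
    {u v : V} (h : G.Reachable u v) :
    φ v ≤ φ u + G.dist u v := by
  obtain ⟨p, hp⟩ := h.exists_walk_length_eq_dist
  exact hp ▸ p.apply_le_apply_add_length hφ

lemma Connected.diam_eq [Finite V] (hG : G.Connected) {n : ℕ} (hle : ∀ u v, G.dist u v ≤ n)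
    {u v : V} (h : G.dist u v = n) : G.diam = n := by
  have : Nonempty V := hG.nonempty
  obtain ⟨a, b, hab⟩ := G.exists_dist_eq_diam
  exact le_antisymm (hab ▸ hle a b)
    (h ▸ dist_le_diam (connected_iff_ediam_ne_top.mp hG))

end SimpleGraph

def CubeNear {k : ℕ} (f g : Fin k → Fin 3) : Prop :=
  ∀ i, (f i : ℕ) ≤ g i + 1 ∧ (g i : ℕ) ≤ f i + 1

def landmarkCube (k : ℕ) : SimpleGraph (Fin k ⊕ (Fin k → Fin 3)) :=
  SimpleGraph.fromRel fun
    | .inl i, .inr f => f i = 0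
    | .inr f, .inr g => CubeNear f g
    | _, _ => False

namespace landmarkCube

variable {k : ℕ}

open Sum

@[simp] lemma adj_inl_inr {i : Fin k} {f : Fin k → Fin 3} :
    (landmarkCube k).Adj (inl i) (inr f) ↔ f i = 0 := by
  simp [landmarkCube]

@[simp] lemma adj_inr_inl {i : Fin k} {f : Fin k → Fin 3} :
    (landmarkCube k).Adj (inr f) (inl i) ↔ f i = 0 := by
  simp [landmarkCube]

@[simp] lemma adj_inr_inr {f g : Fin k → Fin 3} :
    (landmarkCube k).Adj (inr f) (inr g) ↔ f ≠ g ∧ CubeNear f g := by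
  simp only [landmarkCube, fromRel_adj, ne_eq, inr.injEq, and_congr_right_iff]
  exact fun _ => ⟨fun h => h.elim id fun h i => ⟨(h i).2, (h i).1⟩, .inl⟩

lemma cubeNear_const_one (f : Fin k → Fin 3) : CubeNear f fun _ => 1 := by
  intro i
  have := (f i).isLt
  simp only [Fin.isValue, Fin.val_one]
  omega

lemma dist_inr_inr_le_one {f g : Fin k → Fin 3} (h : CubeNear f g) :
    (landmarkCube k).dist (inr f) (inr g) ≤ 1 := by
  rcases eq_or_ne f g with rfl | hne
  · simp
  · exact (dist_eq_one_iff_adj.mpr (adj_inr_inr.mpr ⟨hne, h⟩)).le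

lemma connected : (landmarkCube k).Connected := by
  have reach_one (f : Fin k → Fin 3) : (landmarkCube k).Reachable (inr f) (inr fun _ => 1) := by
    rcases eq_or_ne f (fun _ => 1) with rfl | hne
    · rfl
    · exact (adj_inr_inr.mpr ⟨hne, cubeNear_const_one f⟩).reachable
  refine (landmarkCube k).connected_iff_exists_forall_reachable.mpr ⟨inr fun _ => 1, ?_⟩
  rintro (i | f)
  · exact (reach_one 0).symm.trans (adj_inr_inl.mpr rfl).reachable
  · exact (reach_one f).symm

lemma dist_inr_inl_le (f : Fin k → Fin 3) (i : Fin k) :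
    (landmarkCube k).dist (inr f) (inl i) ≤ f i + 1 := by
  induction h : (f i : ℕ) generalizing f with
  | zero => exact (dist_eq_one_iff_adj.mpr (adj_inr_inl.mpr (Fin.ext h))).le
  | succ n ih =>
    let g := Function.update f i ⟨n, by have := (f i).isLt; omega⟩
    have hfg : CubeNear f g := by
      intro j
      rcases eq_or_ne j i with rfl | hj
      · simp [g]; omega
      · simp [g, Function.update_of_ne hj]
    calc (landmarkCube k).dist (inr f) (inl i)
        ≤ (landmarkCube k).dist (inr f) (inr g) + (landmarkCube k).dist (inr g) (inl i) :=
          connected.dist_triangle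
      _ ≤ 1 + (n + 1) := add_le_add (dist_inr_inr_le_one hfg) (ih g (by simp [g]))
      _ = n + 1 + 1 := by ring

lemma le_dist_inl_inr (f : Fin k → Fin 3) (i : Fin k) :
    f i + 1 ≤ (landmarkCube k).dist (inl i) (inr f) := by
  let φ : Fin k ⊕ (Fin k → Fin 3) → ℕ :=
    Sum.elim (fun j => if j = i then 0 else 2) (fun g => g i + 1)
  -- `φ` vanishes at `inl i` and changes by at most one along each edge
  have hφ : ∀ x y, (landmarkCube k).Adj x y → φ y ≤ φ x + 1 := by
    rintro (j | g) (j' | g') hadj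
    · simp [landmarkCube] at hadj
    · rw [adj_inl_inr] at hadj
      rcases eq_or_ne j i with rfl | hj <;> simp_all [φ]
    · rw [adj_inr_inl] at hadj
      rcases eq_or_ne j' i with rfl | hj <;> simp_all [φ]
    · simp only [adj_inr_inr] at hadj
      simpa [φ] using (hadj.2 i).2
  simpa [φ] using (connected.preconnected (inl i) (inr f)).apply_le_apply_add_dist hφ

lemma dist_inr_inl (f : Fin k → Fin 3) (i : Fin k) :
    (landmarkCube k).dist (inr f) (inl i) = f i + 1 :=
  (dist_inr_inl_le f i).antisymm (dist_comm.trans_ge (le_dist_inl_inr f i))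

lemma dist_inr_inr_le_two (f g : Fin k → Fin 3) :
    (landmarkCube k).dist (inr f) (inr g) ≤ 2 := by
  let mid (a b : Fin 3) : Fin 3 := if a = b then a else 1
  have hmid : ∀ a b : Fin 3, ((a : ℕ) ≤ mid a b + 1 ∧ (mid a b : ℕ) ≤ a + 1) ∧
      ((mid a b : ℕ) ≤ b + 1 ∧ (b : ℕ) ≤ mid a b + 1) := by decide
  let m : Fin k → Fin 3 := fun i => mid (f i) (g i)
  have hfm : CubeNear f m := fun i => (hmid (f i) (g i)).1
  have hmg : CubeNear m g := fun i => (hmid (f i) (g i)).2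
  calc (landmarkCube k).dist (inr f) (inr g)
      ≤ (landmarkCube k).dist (inr f) (inr m) + (landmarkCube k).dist (inr m) (inr g) :=
        connected.dist_triangle
    _ ≤ 1 + 1 := add_le_add (dist_inr_inr_le_one hfm) (dist_inr_inr_le_one hmg)

lemma dist_inl_inl_le_two (i j : Fin k) : (landmarkCube k).dist (inl i) (inl j) ≤ 2 :=
  calc (landmarkCube k).dist (inl i) (inl j)
      ≤ (landmarkCube k).dist (inl i) (inr 0) + (landmarkCube k).dist (inr 0) (inl j) :=
        connected.dist_triangle
    _ ≤ 1 + 1 := add_le_add (dist_inr_inl_le 0 i |>.trans_eq' dist_comm) (dist_inr_inl_le 0 j)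

lemma diam_eq (hk : 1 ≤ k) : (landmarkCube k).diam = 3 := by
  refine connected.diam_eq (u := inr fun _ => 2) (v := inl ⟨0, hk⟩) ?_ (dist_inr_inl _ _)
  rintro (i | f) (j | g)
  · exact (dist_inl_inl_le_two i j).trans (by norm_num)
  · rw [dist_comm, dist_inr_inl]; have := (g i).isLt; omega
  · rw [dist_inr_inl]; have := (f j).isLt; omega
  · exact (dist_inr_inr_le_two f g).trans (by norm_num)

def landmarks (k : ℕ) : Finset (Fin k ⊕ (Fin k → Fin 3)) :=
  Finset.univ.map .inl

@[simp] lemma card_landmarks : (landmarks k).card = k := by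
  simp [landmarks]

lemma isResolvingSet_landmarks : IsResolvingSet (landmarkCube k) (landmarks k) := by
  have hpos (i : Fin k) (x) (hx : x ≠ inl i) : (landmarkCube k).dist x (inl i) ≠ 0 :=
    (connected.pos_dist_of_ne hx).ne'
  rintro (i | f) v huv
  · exact ⟨inl i, by simp [landmarks], by simpa using (hpos i v huv.symm).symm⟩
  rcases v with j | g
  · exact ⟨inl j, by simp [landmarks], by simpa using hpos j _ huv⟩
  obtain ⟨i, hi⟩ := Function.ne_iff.mp fun h => huv (congrArg inr h)
  refine ⟨inl i, by simp [landmarks], ?_⟩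
  rw [dist_inr_inl, dist_inr_inl]
  simpa [Fin.val_inj] using hi

lemma dist_inr_eq_of_mod_three_eq {f g : Fin k → Fin 3} (w : Fin k ⊕ (Fin k → Fin 3))
    (h : (landmarkCube k).dist (inr f) w % 3 = (landmarkCube k).dist (inr g) w % 3) :
    (landmarkCube k).dist (inr f) w = (landmarkCube k).dist (inr g) w := by
  rcases w with i | m
  · rw [dist_inr_inl, dist_inr_inl] at h ⊢
    have := (f i).isLt; have := (g i).isLt
    omega
  · have := dist_inr_inr_le_two f m; have := dist_inr_inr_le_two g m
    omega

noncomputable def distCode (W : Finset (Fin k ⊕ (Fin k → Fin 3))) (f : Fin k → Fin 3) :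
    W → Fin 3 :=
  fun w => ⟨(landmarkCube k).dist (inr f) w % 3, Nat.mod_lt _ three_pos⟩

lemma distCode_injective {W : Finset (Fin k ⊕ (Fin k → Fin 3))}
    (hW : IsResolvingSet (landmarkCube k) W) : Function.Injective (distCode W) := by
  intro f g hfg
  by_contra hne
  obtain ⟨w, hw, hd⟩ := hW (inr f) (inr g) (inr_injective.ne hne)
  exact hd (dist_inr_eq_of_mod_three_eq w (Fin.val_eq_of_eq (congrFun hfg ⟨w, hw⟩)))

lemma card_le_of_isResolvingSet {W : Finset (Fin k ⊕ (Fin k → Fin 3))}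
    (hW : IsResolvingSet (landmarkCube k) W) : k ≤ W.card := by
  have := Fintype.card_le_of_injective _ (distCode_injective hW)
  simp only [Fintype.card_fun, Fintype.card_fin, Fintype.card_coe] at this
  exact (Nat.pow_le_pow_iff_right (by norm_num)).mp this

lemma metricDim_eq : metricDim (landmarkCube k) = k :=
  le_antisymm (Nat.sInf_le ⟨_, isResolvingSet_landmarks, card_landmarks⟩)
    (le_csInf ⟨k, _, isResolvingSet_landmarks, card_landmarks⟩
      fun _ ⟨_, hW, hcard⟩ => hcard ▸ card_le_of_isResolvingSet hW)

lemma eq_of_dist_mod_three_eq_zero {f g : Fin k → Fin 3}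
    (h : (landmarkCube k).dist (inr f) (inr g) % 3 = 0) : f = g := by
  have := dist_inr_inr_le_two f g
  exact inr_injective (connected.dist_eq_zero_iff.mp (by omega))

lemma inr_notMem_of_isResolvingSet {W : Finset (Fin k ⊕ (Fin k → Fin 3))}
    (hW : IsResolvingSet (landmarkCube k) W) (hcard : W.card = k) (hk : 2 ≤ k)
    (g : Fin k → Fin 3) : inr g ∉ W := by
  intro hg
  have hsurj : Function.Surjective (distCode W) := by
    refine ((Fintype.bijective_iff_injective_and_card _).mpr ⟨distCode_injective hW, ?_⟩).2
    simp [hcard]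
  obtain ⟨w, hw, hwg⟩ := Finset.exists_mem_ne (hcard ▸ hk) (inr g)
  let c₀ : W → Fin 3 := 0
  let c₁ : W → Fin 3 := Function.update 0 ⟨w, hw⟩ 1
  have hc : c₀ ≠ c₁ := fun h => by simpa [c₀, c₁] using congrFun h ⟨w, hw⟩
  have preimage_eq (c : W → Fin 3) (hc : c ⟨inr g, hg⟩ = 0) : distCode W g = c := by
    obtain ⟨f, rfl⟩ := hsurj c
    rw [← eq_of_dist_mod_three_eq_zero (Fin.val_eq_of_eq hc)]
  exact hc ((preimage_eq c₀ rfl).symm.trans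
    (preimage_eq c₁ (by simp [c₁, Subtype.ext_iff, hwg.symm])))

lemma eq_landmarks_of_isResolvingSet {W : Finset (Fin k ⊕ (Fin k → Fin 3))}
    (hW : IsResolvingSet (landmarkCube k) W) (hcard : W.card = k) (hk : 2 ≤ k) :
    W = landmarks k := by
  refine Finset.eq_of_subset_of_card_le (fun x hx => ?_) (by simp [hcard])
  rcases x with i | g
  · simp [landmarks]
  · exact absurd hx (inr_notMem_of_isResolvingSet hW hcard hk g)

lemma uniquelyKDimensional (hk : 2 ≤ k) : UniquelyKDimensional (landmarkCube k) k := by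
  refine ⟨⟨landmarks k, ⟨isResolvingSet_landmarks, by simp [metricDim_eq]⟩, fun W hW => ?_⟩,
    metricDim_eq⟩
  exact eq_landmarks_of_isResolvingSet hW.1 (hW.2.trans metricDim_eq) hk

end landmarkCube

theorem stmt12 (k : ℕ) (hk : 2 ≤ k) :
    ∃ G : SimpleGraph (Fin (k + 3 ^ k)), G.Connected ∧ G.diam = 3 ∧
      UniquelyKDimensional G k := by
  have hcard : Fintype.card (Fin k ⊕ (Fin k → Fin 3)) = k + 3 ^ k := by simp
  let φ := (landmarkCube k).overFinIso hcard
  exact ⟨_, φ.connected_iff.mp landmarkCube.connected,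
    φ.diam_eq.trans (landmarkCube.diam_eq (by omega)),
    φ.uniquelyKDimensional_iff.mpr (landmarkCube.uniquelyKDimensional hk)⟩
end

section
/- There exists a finite connected simple graph of order 9 with a vertex of degree 8 that is uniquely dimensional with metric dimension 3. -/
open SimpleGraph

/-! A vertex adjacent to all others forces every distance to be `0`, `1` or `2`, determined by
equality and adjacency alone. For the graph below, with universal vertex `0`, this turns
"`{1, 2, 8}` resolves, and no other set of at most three vertices does" into a finite check. -/

namespace SimpleGraph

variable {V : Type*} {G : SimpleGraph V}

theorem connected_of_forall_ne_adj (c : V) (hc : ∀ v, v ≠ c → G.Adj c v) : G.Connected := by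
  have reach (u : V) : G.Reachable c u := by
    by_cases hu : u = c
    · subst hu; rfl
    · exact (hc u hu).reachable
  exact (connected_iff G).mpr ⟨fun u v => (reach u).symm.trans (reach v), ⟨c⟩⟩

theorem dist_eq_of_forall_ne_adj [DecidableEq V] [DecidableRel G.Adj] (c : V)
    (hc : ∀ v, v ≠ c → G.Adj c v) (u v : V) :
    G.dist u v = if u = v then 0 else if G.Adj u v then 1 else 2 := by
  split_ifs with huv hadj
  · exact huv ▸ dist_self
  · exact dist_eq_one_iff_adj.mpr hadj
  · have hu : u ≠ c := fun h => hadj (h ▸ hc v fun hv => huv (h.trans hv.symm))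
    have hv : v ≠ c := fun h => hadj (h ▸ (hc u hu).symm)
    have hle : G.dist u v ≤ 2 := dist_le ((Walk.nil.cons (hc v hv)).cons (hc u hu).symm)
    have hpos : 0 < G.dist u v := (connected_of_forall_ne_adj c hc).pos_dist_of_ne huv
    have hne : G.dist u v ≠ 1 := fun h => hadj (dist_eq_one_iff_adj.mp h)
    omega

theorem card_neighborSet_of_forall_ne_adj [Fintype V] (c : V) (hc : ∀ v, v ≠ c → G.Adj c v) :
    Nat.card (G.neighborSet c) = Fintype.card V - 1 := by
  have : G.neighborSet c = {c}ᶜ := Set.ext fun v => ⟨fun h => (G.ne_of_adj h).symm, hc v⟩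
  rw [this, Nat.card_coe_set_eq, Set.ncard_compl, Set.ncard_singleton, Nat.card_eq_fintype_card]

end SimpleGraph

section MetricDimension

variable {V : Type*} {G : SimpleGraph V}

theorem isResolvingSet_iff_of_forall_ne_adj [DecidableEq V] [DecidableRel G.Adj] (c : V)
    (hc : ∀ v, v ≠ c → G.Adj c v) (W : Finset V) :
    IsResolvingSet G W ↔ ∀ u v : V, u ≠ v → ∃ w ∈ W,
      (if u = w then 0 else if G.Adj u w then 1 else 2) ≠
        (if v = w then 0 else if G.Adj v w then 1 else 2) := by
  simp only [IsResolvingSet, G.dist_eq_of_forall_ne_adj c hc]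

theorem uniquelyKDimensional_of_forall_card_le {B : Finset V} (hB : IsResolvingSet G B)
    (h : ∀ W : Finset V, IsResolvingSet G W → W.card ≤ B.card → W = B) :
    UniquelyKDimensional G B.card := by
  have hdim : metricDim G = B.card := by
    refine le_antisymm (Nat.sInf_le ⟨B, hB, rfl⟩) (le_csInf ⟨_, B, hB, rfl⟩ ?_)
    rintro _ ⟨W, hW, rfl⟩
    by_contra! hlt
    exact hlt.ne (congrArg Finset.card (h W hW hlt.le))
  exact ⟨⟨B, ⟨hB, hdim.symm⟩, fun W hW => h W hW.1 (hW.2.trans hdim).le⟩, hdim⟩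

end MetricDimension

def exampleGraph : SimpleGraph (Fin 9) := SimpleGraph.fromRel fun u v =>
  u = 0 ∨ (u, v) ∈ [(1, 2), (1, 3), (1, 4), (2, 4), (2, 7), (2, 8), (3, 4), (3, 6), (3, 7),
    (4, 5), (4, 6), (4, 7), (5, 6), (5, 7), (6, 7), (6, 8), (7, 8)]

instance : DecidableRel exampleGraph.Adj := fun u v =>
  inferInstanceAs (Decidable ((SimpleGraph.fromRel _).Adj u v))

theorem exampleGraph_adj_zero : ∀ v : Fin 9, v ≠ 0 → exampleGraph.Adj 0 v := by
  decide

theorem isResolvingSet_exampleGraph : IsResolvingSet exampleGraph {1, 2, 8} := by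
  rw [isResolvingSet_iff_of_forall_ne_adj 0 exampleGraph_adj_zero]
  decide

set_option maxHeartbeats 2000000 in
set_option maxRecDepth 100000 in
theorem eq_of_isResolvingSet_exampleGraph :
    ∀ W : Finset (Fin 9), IsResolvingSet exampleGraph W → W.card ≤ 3 → W = {1, 2, 8} := by
  simp only [isResolvingSet_iff_of_forall_ne_adj 0 exampleGraph_adj_zero]
  decide

theorem stmt15 :
    ∃ G : SimpleGraph (Fin 9), G.Connected ∧ UniquelyKDimensional G 3 ∧
      ∃ v, Nat.card (G.neighborSet v) = 8 :=
  ⟨exampleGraph, connected_of_forall_ne_adj 0 exampleGraph_adj_zero,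
    uniquelyKDimensional_of_forall_card_le isResolvingSet_exampleGraph
      eq_of_isResolvingSet_exampleGraph,
    0, card_neighborSet_of_forall_ne_adj 0 exampleGraph_adj_zero⟩
end
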